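/- arXiv:2001.06756 — 2 statements merged into one kernel-verified Lean document; each statement's English description precedes it below -/
import Mathlib

section
/- Generalized Ostrogradsky theorem, no-stationary-point branch (Theorem 2, condition 3-a): Assume L₀, each C a, and v are differentiable and the momentum identity and constraint identity hold at every point of ℝⁿ × ℝⁿ. If there exists no point (q,p) satisfying both v(q,p) = 0 and, for every I, ∂₂ᴵL₀(v(q,p), q) + Σ_a F a (q,p) · ∂₂ᴵ(C a)(v(q,p), q) = 0, then the on-shell Hamiltonian H has no local minimum and no local maximum at any point of ℝⁿ × ℝⁿ. -/
/-!
Differentiating the momentum and constraint identities makes every term containing the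
derivative of `v` cancel from `dH`, leaving Hamilton's equations: `∂H/∂p = v` and
`∂H/∂q_I = -(∂₂ᴵL₀ + ∑ a, F a ∂₂ᴵ(C a))`. A local extremum of `H` is a critical point, hence
a stationary configuration, and there is none.
-/

open scoped BigOperators

/-- Partial derivative of `f` with respect to the `I`-th coordinate of its first argument. -/
noncomputable def pd1 {n : ℕ} (f : (Fin n → ℝ) × (Fin n → ℝ) → ℝ) (I : Fin n)
    (x : (Fin n → ℝ) × (Fin n → ℝ)) : ℝ :=
  deriv (fun t => f (Function.update x.1 I t, x.2)) (x.1 I)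

/-- Partial derivative of `f` with respect to the `I`-th coordinate of its second argument. -/
noncomputable def pd2 {n : ℕ} (f : (Fin n → ℝ) × (Fin n → ℝ) → ℝ) (I : Fin n)
    (x : (Fin n → ℝ) × (Fin n → ℝ)) : ℝ :=
  deriv (fun t => f (x.1, Function.update x.2 I t)) (x.2 I)

section PartialDerivatives

variable {n : ℕ} {f : (Fin n → ℝ) × (Fin n → ℝ) → ℝ} {x : (Fin n → ℝ) × (Fin n → ℝ)}

theorem pd1_eq_fderiv (hf : DifferentiableAt ℝ f x) (I : Fin n) :
    pd1 f I x = fderiv ℝ f x (Pi.single I 1, 0) := by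
  have hline : HasDerivAt (fun t => (Function.update x.1 I t, x.2)) (Pi.single I 1, 0) (x.1 I) :=
    (hasDerivAt_update x.1 I (x.1 I)).prodMk (hasDerivAt_const _ _)
  have hf' : HasFDerivAt f (fderiv ℝ f x) (Function.update x.1 I (x.1 I), x.2) := by
    simpa using hf.hasFDerivAt
  exact (hf'.comp_hasDerivAt _ hline).deriv

theorem pd2_eq_fderiv (hf : DifferentiableAt ℝ f x) (I : Fin n) :
    pd2 f I x = fderiv ℝ f x (0, Pi.single I 1) := by
  have hline : HasDerivAt (fun t => (x.1, Function.update x.2 I t)) (0, Pi.single I 1) (x.2 I) :=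
    (hasDerivAt_const _ _).prodMk (hasDerivAt_update x.2 I (x.2 I))
  have hf' : HasFDerivAt f (fderiv ℝ f x) (x.1, Function.update x.2 I (x.2 I)) := by
    simpa using hf.hasFDerivAt
  exact (hf'.comp_hasDerivAt _ hline).deriv

theorem fderiv_apply_eq_sum_pd (hf : DifferentiableAt ℝ f x) (w : (Fin n → ℝ) × (Fin n → ℝ)) :
    fderiv ℝ f x w = ∑ J, w.1 J * pd1 f J x + ∑ J, w.2 J * pd2 f J x := by
  have hw : w = ∑ J, w.1 J • ((Pi.single J 1, 0) : (Fin n → ℝ) × (Fin n → ℝ))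
      + ∑ J, w.2 J • ((0, Pi.single J 1) : (Fin n → ℝ) × (Fin n → ℝ)) := by
    ext i <;> simp [Prod.fst_sum, Prod.snd_sum, Finset.sum_apply, Pi.single_apply]
  conv_lhs => rw [hw]
  simp only [map_add, map_sum, map_smul, smul_eq_mul, pd1_eq_fderiv hf, pd2_eq_fderiv hf]

end PartialDerivatives

section Hamiltonian

variable {n m : ℕ} (L₀ : (Fin n → ℝ) × (Fin n → ℝ) → ℝ) (C : Fin m → ((Fin n → ℝ) × (Fin n → ℝ) → ℝ))
  (v : (Fin n → ℝ) × (Fin n → ℝ) → (Fin n → ℝ)) (F : (Fin n → ℝ) × (Fin n → ℝ) → (Fin m → ℝ))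

noncomputable def hamiltonian (z : (Fin n → ℝ) × (Fin n → ℝ)) : ℝ :=
  (∑ I, v z I * z.2 I) - L₀ (v z, z.1)

/-- `-∂H/∂q_I`: the `q_I`-derivative of `L₀ + ∑ a, F a • C a` with the multipliers frozen. -/
noncomputable def generalizedForce (z : (Fin n → ℝ) × (Fin n → ℝ)) (I : Fin n) : ℝ :=
  pd2 L₀ I (v z, z.1) + ∑ a, F z a * pd2 (C a) I (v z, z.1)

variable {L₀ C v F}

theorem fderiv_hamiltonian_apply {z : (Fin n → ℝ) × (Fin n → ℝ)}
    (hL : DifferentiableAt ℝ L₀ (v z, z.1)) (hv : DifferentiableAt ℝ v z)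
    (w : (Fin n → ℝ) × (Fin n → ℝ)) :
    fderiv ℝ (hamiltonian L₀ v) z w = ∑ I, (fderiv ℝ v z w I * z.2 I + v z I * w.2 I)
      - fderiv ℝ L₀ (v z, z.1) (fderiv ℝ v z w, w.1) := by
  have hpair : HasFDerivAt (fun z => ∑ I, v z I * z.2 I) _ z :=
    HasFDerivAt.fun_sum fun I _ =>
      (((hasFDerivAt_apply I (v z)).comp z hv.hasFDerivAt).mul
        ((hasFDerivAt_apply I z.2).comp z hasFDerivAt_snd) :)
  have hL' : HasFDerivAt (fun z => L₀ (v z, z.1)) _ z :=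
    hL.hasFDerivAt.comp z (hv.hasFDerivAt.prodMk hasFDerivAt_fst)
  have hH : HasFDerivAt (hamiltonian L₀ v) _ z := hpair.fun_sub hL'
  rw [hH.fderiv]
  simp [add_comm, mul_comm]

theorem fderiv_constraint_apply_eq_zero {c : (Fin n → ℝ) × (Fin n → ℝ) → ℝ}
    (hcon : ∀ z, c (v z, z.1) = 0) {z : (Fin n → ℝ) × (Fin n → ℝ)}
    (hc : DifferentiableAt ℝ c (v z, z.1)) (hv : DifferentiableAt ℝ v z)
    (w : (Fin n → ℝ) × (Fin n → ℝ)) :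
    fderiv ℝ c (v z, z.1) (fderiv ℝ v z w, w.1) = 0 := by
  have hcomp := hc.hasFDerivAt.comp z (hv.hasFDerivAt.prodMk hasFDerivAt_fst)
  have hzero : c ∘ (fun z => (v z, z.1)) = fun _ => 0 := funext hcon
  rw [hzero] at hcomp
  simpa using congrArg (· w) (hcomp.unique (hasFDerivAt_const 0 z))

theorem fderiv_hamiltonian_apply_eq (hL : Differentiable ℝ L₀) (hC : ∀ a, Differentiable ℝ (C a))
    (hv : Differentiable ℝ v)
    (hmom : ∀ z : (Fin n → ℝ) × (Fin n → ℝ), ∀ I : Fin n,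
      z.2 I = pd1 L₀ I (v z, z.1) + ∑ a, F z a * pd1 (C a) I (v z, z.1))
    (hcon : ∀ z : (Fin n → ℝ) × (Fin n → ℝ), ∀ a, C a (v z, z.1) = 0)
    (z w : (Fin n → ℝ) × (Fin n → ℝ)) :
    fderiv ℝ (hamiltonian L₀ v) z w =
      ∑ I, v z I * w.2 I - ∑ I, w.1 I * generalizedForce L₀ C v F z I := by
  have hmomz := hmom z
  set x : (Fin n → ℝ) × (Fin n → ℝ) := (v z, z.1)
  set u := fderiv ℝ v z w
  have hconstr (a : Fin m) :
      ∑ J, u J * pd1 (C a) J x = -∑ J, w.1 J * pd2 (C a) J x := by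
    have h := fderiv_constraint_apply_eq_zero (hcon · a) (hC a _) (hv z) w
    rwa [fderiv_apply_eq_sum_pd (hC a _), ← eq_neg_iff_add_eq_zero] at h
  have hmom_pairing : ∑ I, u I * z.2 I =
      ∑ I, u I * pd1 L₀ I x - ∑ I, w.1 I * ∑ a, F z a * pd2 (C a) I x :=
    calc ∑ I, u I * z.2 I
        = ∑ I, u I * pd1 L₀ I x + ∑ a, F z a * ∑ I, u I * pd1 (C a) I x := by
          simp only [hmomz, mul_add, Finset.sum_add_distrib, Finset.mul_sum]
          rw [Finset.sum_comm (s := Finset.univ (α := Fin n))]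
          congr 1
          exact Finset.sum_congr rfl fun _ _ => Finset.sum_congr rfl fun _ _ => by ring
      _ = ∑ I, u I * pd1 L₀ I x - ∑ I, w.1 I * ∑ a, F z a * pd2 (C a) I x := by
          simp only [hconstr, mul_neg, Finset.sum_neg_distrib, Finset.mul_sum]
          rw [Finset.sum_comm (s := Finset.univ (α := Fin m))]
          congr 2
          exact Finset.sum_congr rfl fun _ _ => Finset.sum_congr rfl fun _ _ => by ring
  rw [fderiv_hamiltonian_apply (hL _) (hv z), fderiv_apply_eq_sum_pd (hL _), Finset.sum_add_distrib,
    hmom_pairing]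
  simp only [generalizedForce, mul_add, Finset.sum_add_distrib]
  ring

theorem fderiv_hamiltonian_eq_zero_iff (hL : Differentiable ℝ L₀)
    (hC : ∀ a, Differentiable ℝ (C a)) (hv : Differentiable ℝ v)
    (hmom : ∀ z : (Fin n → ℝ) × (Fin n → ℝ), ∀ I : Fin n,
      z.2 I = pd1 L₀ I (v z, z.1) + ∑ a, F z a * pd1 (C a) I (v z, z.1))
    (hcon : ∀ z : (Fin n → ℝ) × (Fin n → ℝ), ∀ a, C a (v z, z.1) = 0)
    (z : (Fin n → ℝ) × (Fin n → ℝ)) :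
    fderiv ℝ (hamiltonian L₀ v) z = 0 ↔ v z = 0 ∧ ∀ I, generalizedForce L₀ C v F z I = 0 := by
  simp only [ContinuousLinearMap.ext_iff, zero_apply,
    fderiv_hamiltonian_apply_eq hL hC hv hmom hcon]
  constructor
  · intro h
    refine ⟨funext fun I => ?_, fun I => ?_⟩
    · simpa [Pi.single_apply] using h (0, Pi.single I 1)
    · simpa [Pi.single_apply] using h (Pi.single I 1, 0)
  · rintro ⟨hv0, hforce⟩ w
    simp [hv0, hforce]

end Hamiltonian

/-- Generalized Ostrogradsky theorem, no-stationary-point branch (condition 3-a):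
if the system admits no stationary configuration, the on-shell Hamiltonian
has no local minimum and no local maximum anywhere. -/
theorem generalized_ostrogradsky_no_stationary
    {n m : ℕ}
    (L₀ : (Fin n → ℝ) × (Fin n → ℝ) → ℝ)
    (C : Fin m → ((Fin n → ℝ) × (Fin n → ℝ) → ℝ))
    (v : (Fin n → ℝ) × (Fin n → ℝ) → (Fin n → ℝ))
    (F : (Fin n → ℝ) × (Fin n → ℝ) → (Fin m → ℝ))
    (hL : Differentiable ℝ L₀)
    (hC : ∀ a, Differentiable ℝ (C a))
    (hv : Differentiable ℝ v)
    (hmom : ∀ z : (Fin n → ℝ) × (Fin n → ℝ), ∀ I : Fin n,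
      z.2 I = pd1 L₀ I (v z, z.1) + ∑ a, F z a * pd1 (C a) I (v z, z.1))
    (hcon : ∀ z : (Fin n → ℝ) × (Fin n → ℝ), ∀ a, C a (v z, z.1) = 0)
    (H : (Fin n → ℝ) × (Fin n → ℝ) → ℝ)
    (hH : ∀ z : (Fin n → ℝ) × (Fin n → ℝ), H z = (∑ I, v z I * z.2 I) - L₀ (v z, z.1))
    (hnostat : ¬ ∃ z : (Fin n → ℝ) × (Fin n → ℝ),
      v z = 0 ∧ ∀ I : Fin n,
        pd2 L₀ I (v z, z.1) + ∑ a, F z a * pd2 (C a) I (v z, z.1) = 0) :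
    ∀ z : (Fin n → ℝ) × (Fin n → ℝ), ¬ IsLocalMin H z ∧ ¬ IsLocalMax H z := by
  obtain rfl : H = hamiltonian L₀ v := funext hH
  have hcrit (z) (h : fderiv ℝ (hamiltonian L₀ v) z = 0) : False :=
    hnostat ⟨z, (fderiv_hamiltonian_eq_zero_iff hL hC hv hmom hcon z).1 h⟩
  exact fun z => ⟨fun h => hcrit z h.fderiv_eq_zero, fun h => hcrit z h.fderiv_eq_zero⟩
end

section
/- Ostrogradsky-type Hamiltonian has no local extremum: Let g : ℝ × ℝᵐ → ℝ be twice continuously differentiable and define H : ℝ × ℝ × ℝᵐ → ℝ by H(π, p_φ, x) = π·p_φ + g(π, x). Then H has neither a local minimum nor a local maximum at any point of ℝ × ℝ × ℝᵐ, and H is unbounded above and unbounded below. -/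
/-!
Along `p_φ` the Hamiltonian is affine with slope `π`, so a local extremum must lie on `π = 0`.
There `H` does not depend on `p_φ`, so every nearby point of that line is a local extremum as
well; but `∂H/∂π = p_φ + ∂g/∂π` vanishes for only one value of `p_φ`. Unboundedness is cruder:
`p ↦ H(1, p, x) = p + g(1, x)` is already onto `ℝ`.
-/

open Filter Topology

theorem IsLocalMin.eventually_isLocalMin_of_eq {X β : Type*} [TopologicalSpace X] [Preorder β]
    {f : X → β} {a : X} (hf : IsLocalMin f a) : ∀ᶠ b in 𝓝 a, f b = f a → IsLocalMin f b :=
  hf.eventually_nhds.mono fun _ hb hba => hb.mono fun _ hy => hba ▸ hy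

theorem IsLocalMax.eventually_isLocalMax_of_eq {X β : Type*} [TopologicalSpace X] [Preorder β]
    {f : X → β} {a : X} (hf : IsLocalMax f a) : ∀ᶠ b in 𝓝 a, f b = f a → IsLocalMax f b :=
  hf.eventually_nhds.mono fun _ hb hba => hb.mono fun _ hy => hba ▸ hy

theorem IsLocalExtr.eventually_isLocalExtr_of_eq {X β : Type*} [TopologicalSpace X] [Preorder β]
    {f : X → β} {a : X} (hf : IsLocalExtr f a) : ∀ᶠ b in 𝓝 a, f b = f a → IsLocalExtr f b :=
  hf.elim
    (fun h => h.eventually_isLocalMin_of_eq.mono fun _ hb hba => (hb hba).isExtr)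
    (fun h => h.eventually_isLocalMax_of_eq.mono fun _ hb hba => (hb hba).isExtr)

def ostrogradskyHamiltonian {E : Type*} (g : ℝ × E → ℝ) (z : ℝ × ℝ × E) : ℝ :=
  z.1 * z.2.1 + g (z.1, z.2.2)

section

variable {E : Type*} (g : ℝ × E → ℝ)

theorem ostrogradskyHamiltonian_surjective [Nonempty E] :
    Function.Surjective (ostrogradskyHamiltonian g) := by
  intro y
  obtain ⟨x⟩ := ‹Nonempty E›
  exact ⟨(1, y - g (1, x), x), by simp [ostrogradskyHamiltonian]⟩

variable [TopologicalSpace E]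

theorem fst_eq_zero_of_isLocalExtr_ostrogradskyHamiltonian {z : ℝ × ℝ × E}
    (hz : IsLocalExtr (ostrogradskyHamiltonian g) z) : z.1 = 0 := by
  obtain ⟨π, p, x⟩ := z
  have hline : IsLocalExtr (fun q => π * q + g (π, x)) p :=
    hz.comp_continuous (g := fun q => (π, q, x)) (by fun_prop)
  simpa using hline.hasDerivAt_eq_zero (((hasDerivAt_id p).const_mul π).add_const _)

theorem eq_neg_deriv_of_isLocalExtr_ostrogradskyHamiltonian {q : ℝ} {x : E}
    (hg : DifferentiableAt ℝ (fun t => g (t, x)) 0)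
    (hq : IsLocalExtr (ostrogradskyHamiltonian g) (0, q, x)) :
    q = -deriv (fun t => g (t, x)) 0 := by
  have hline : IsLocalExtr (fun t => t * q + g (t, x)) 0 :=
    hq.comp_continuous (g := fun t => (t, q, x)) (by fun_prop)
  have hderiv : HasDerivAt (fun t => t * q + g (t, x)) (q + deriv (fun t => g (t, x)) 0) 0 :=
    (hasDerivAt_mul_const q).add hg.hasDerivAt
  linarith [hline.hasDerivAt_eq_zero hderiv]

theorem not_isLocalExtr_ostrogradskyHamiltonian {z : ℝ × ℝ × E}
    (hg : DifferentiableAt ℝ (fun t => g (t, z.2.2)) 0) :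
    ¬ IsLocalExtr (ostrogradskyHamiltonian g) z := by
  intro hz
  obtain ⟨π, p, x⟩ := z
  obtain rfl : π = 0 := fst_eq_zero_of_isLocalExtr_ostrogradskyHamiltonian g hz
  have hline : Tendsto (fun q : ℝ => ((0 : ℝ), q, x)) (𝓝 p) (𝓝 (0, p, x)) :=
    (continuous_const.prodMk (continuous_id.prodMk continuous_const)).tendsto p
  have hnear : ∀ᶠ q in 𝓝 p, IsLocalExtr (ostrogradskyHamiltonian g) (0, q, x) := by
    filter_upwards [hline.eventually hz.eventually_isLocalExtr_of_eq] with q hq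
    exact hq (by simp [ostrogradskyHamiltonian])
  have hpin : ∀ᶠ q in 𝓝 p, q = -deriv (fun t => g (t, x)) 0 :=
    hnear.mono fun q => eq_neg_deriv_of_isLocalExtr_ostrogradskyHamiltonian g hg
  obtain ⟨q, hq, hqp⟩ :=
    ((hpin.filter_mono nhdsWithin_le_nhds).and (self_mem_nhdsWithin (s := {p}ᶜ))).exists
  exact hqp (hq.trans hpin.self_of_nhds.symm)

end

/-- The Ostrogradsky-type Hamiltonian `H(π, p_φ, x) = π·p_φ + g(π, x)` has no local
extremum anywhere and is unbounded above and below. -/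
theorem ostrogradsky_hamiltonian_pathology
    {m : ℕ} (g : ℝ × (Fin m → ℝ) → ℝ) (hg : ContDiff ℝ 2 g)
    (H : ℝ × ℝ × (Fin m → ℝ) → ℝ)
    (hH : ∀ z : ℝ × ℝ × (Fin m → ℝ), H z = z.1 * z.2.1 + g (z.1, z.2.2)) :
    (∀ z : ℝ × ℝ × (Fin m → ℝ), ¬ IsLocalMin H z ∧ ¬ IsLocalMax H z) ∧
    ¬ BddAbove (Set.range H) ∧ ¬ BddBelow (Set.range H) := by
  obtain rfl : H = ostrogradskyHamiltonian g := funext hH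
  have hextr : ∀ z, ¬ IsLocalExtr (ostrogradskyHamiltonian g) z := fun z =>
    not_isLocalExtr_ostrogradskyHamiltonian g <|
      ((hg.differentiable (by norm_num)).comp (by fun_prop) : Differentiable ℝ _) 0
  rw [(ostrogradskyHamiltonian_surjective g).range_eq]
  exact ⟨fun z => ⟨fun h => hextr z h.isExtr, fun h => hextr z h.isExtr⟩,
    not_bddAbove_univ, not_bddBelow_univ⟩
end
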